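/- Let P be a natural unit interval order on [n], let E = |E(inc(P))|, and fix N ≥ 1. Write X_{inc(P)}(x_1,…,x_N;t) = Σ_{j=0}^{E} X_j(x_1,…,x_N) t^j. Then X_{inc(P)}(x_1,…,x_N;t) is palindromic as a polynomial in t: X_j = X_{E−j} in ℤ[x_1,…,x_N] for all 0 ≤ j ≤ E. -/

import Mathlib

open scoped Classical

/-- Two elements are incomparable with respect to a strict order relation `lt`. -/
def Incomp {n : ℕ} (lt : Fin n → Fin n → Prop) (a b : Fin n) : Prop :=
  a ≠ b ∧ ¬ lt a b ∧ ¬ lt b a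

/-- A natural unit interval order on `[n]` (modeled on `Fin n`): a strict partial order
`lt` such that (i) `x <_P y` implies `x < y` in the natural order, and (ii) whenever
`x <_P z` and `y` is `P`-incomparable to both `x` and `z`, then `x < y < z` in the
natural order.  (Irreflexivity and asymmetry follow from condition (i).) -/
structure NUIO (n : ℕ) where
  lt : Fin n → Fin n → Prop
  trans : ∀ a b c, lt a b → lt b c → lt a c
  natural : ∀ a b, lt a b → (a : ℕ) < (b : ℕ)
  unit : ∀ x y z, lt x z → Incomp lt x y → Incomp lt y z →
    (x : ℕ) < (y : ℕ) ∧ (y : ℕ) < (z : ℕ)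

/-- `inv_G(σ)` where `G` is the incomparability graph of the relation `lt`:
the number of pairs `i < j` with `σ(i) > σ(j)` and `{σ(i), σ(j)}` an edge of `G`. -/
noncomputable def invInc {n : ℕ} (lt : Fin n → Fin n → Prop) (σ : Equiv.Perm (Fin n)) : ℕ :=
  (Finset.univ.filter fun p : Fin n × Fin n =>
    p.1 < p.2 ∧ (σ p.2 : ℕ) < (σ p.1 : ℕ) ∧ Incomp lt (σ p.1) (σ p.2)).card

/-- `maj_P(σ)`: the sum of the (1-based) positions `i` with `σ(i) >_P σ(i+1)`. -/
noncomputable def majP {n : ℕ} (lt : Fin n → Fin n → Prop) (σ : Equiv.Perm (Fin n)) : ℕ :=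
  ∑ j ∈ Finset.range n,
    if h : j + 1 < n then
      (if lt (σ ⟨j + 1, h⟩) (σ ⟨j, Nat.lt_of_succ_lt h⟩) then j + 1 else 0)
    else 0

/-- The number of edges of the incomparability graph of the relation `lt`. -/
noncomputable def numIncEdges {n : ℕ} (lt : Fin n → Fin n → Prop) : ℕ :=
  (Finset.univ.filter fun p : Fin n × Fin n => p.1 < p.2 ∧ Incomp lt p.1 p.2).card

/-- The ascent number of a coloring `c` of the incomparability graph of `lt`:
the number of edges `{i,j}` with `i < j` and `c i < c j`. -/
noncomputable def ascC {n N : ℕ} (lt : Fin n → Fin n → Prop) (c : Fin n → Fin N) : ℕ :=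
  (Finset.univ.filter fun p : Fin n × Fin n =>
    p.1 < p.2 ∧ Incomp lt p.1 p.2 ∧ (c p.1 : ℕ) < (c p.2 : ℕ)).card

/-- The chromatic quasisymmetric polynomial `X_G(x_1,…,x_N;t)` of the incomparability
graph `G` of `lt`, as a polynomial in `t` over `ℤ[x_1,…,x_N]`. -/
noncomputable def chromIncQSym (N n : ℕ) (lt : Fin n → Fin n → Prop) :
    Polynomial (MvPolynomial (Fin N) ℤ) :=
  ∑ c ∈ Finset.univ.filter (fun c : Fin n → Fin N =>
      ∀ a b : Fin n, Incomp lt a b → c a ≠ c b),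
    Polynomial.X ^ ascC lt c * Polynomial.C (∏ i, MvPolynomial.X (c i))

/-!
The coefficient `X_j` is the sum of `x^c` over the proper colourings `c` with `j` ascents.
Reversing the colours turns ascents into descents, so reversing the variables maps `X_j` to
`X_{E-j}`; palindromicity follows once every `X_j` is a symmetric function.

Invariance under the transposition of two consecutive colours `a`, `a + 1` is the involution of
Shareshian–Wachs. The neighbourhoods in `inc(P)` are intervals of `[n]` (`IncConvex`), so every
connected component of the subgraph induced by the colours `a`, `a + 1` is a path through its
vertices in increasing order, coloured alternately. Swapping `a` and `a + 1` on the components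
of odd size exchanges the numbers of `a`'s and `(a + 1)`'s, since an even component has as many
of both; it keeps the number of ascents, since a path with an even number of edges has as many
ascending as descending ones, and other colours compare with `a` and `a + 1` alike.
-/

open Finset MvPolynomial

section

variable {n N : ℕ}

theorem Incomp.symm {lt : Fin n → Fin n → Prop} {u v : Fin n} (h : Incomp lt u v) :
    Incomp lt v u :=
  ⟨h.1.symm, h.2.2, h.2.1⟩

def IncConvex (lt : Fin n → Fin n → Prop) : Prop :=
  ∀ ⦃x y z : Fin n⦄, x < y → y < z → Incomp lt x z → Incomp lt x y ∧ Incomp lt y z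

theorem NUIO.incConvex (P : NUIO n) : IncConvex P.lt := by
  intro x y z hxy hyz hxz
  have hyx : ¬ P.lt y x := fun h => hxy.not_gt (P.natural _ _ h)
  have hzy : ¬ P.lt z y := fun h => hyz.not_gt (P.natural _ _ h)
  have hxy' : Incomp P.lt x y := by
    refine ⟨hxy.ne, fun h => ?_, hyx⟩
    have hyz' : Incomp P.lt y z := ⟨hyz.ne, fun h' => hxz.2.1 (P.trans _ _ _ h h'), hzy⟩
    exact hyz.not_gt (P.unit x z y h hxz hyz'.symm).2
  exact ⟨hxy', hyz.ne, fun h => hxy.not_gt (P.unit y x z h hxy'.symm hxz).1, hzy⟩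

def IsProperColoring (lt : Fin n → Fin n → Prop) (c : Fin n → Fin N) : Prop :=
  ∀ u v, Incomp lt u v → c u ≠ c v

noncomputable def ascCoeff (N n : ℕ) (lt : Fin n → Fin n → Prop) (j : ℕ) :
    MvPolynomial (Fin N) ℤ :=
  ∑ c ∈ univ.filter (fun c : Fin n → Fin N => IsProperColoring lt c ∧ ascC lt c = j),
    ∏ i, X (c i)

theorem coeff_chromIncQSym (lt : Fin n → Fin n → Prop) (j : ℕ) :
    (chromIncQSym N n lt).coeff j = ascCoeff N n lt j := by
  simp only [chromIncQSym, ascCoeff, Polynomial.finsetSum_coeff, mul_comm (Polynomial.X ^ _),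
    Polynomial.coeff_C_mul_X_pow, sum_ite, sum_const_zero, add_zero, filter_filter,
    eq_comm (a := j)]
  exact sum_congr (filter_congr fun _ _ => Iff.rfl) fun _ _ => rfl

theorem rename_ascCoeff_of_involutive {lt : Fin n → Fin n → Prop} (σ : Equiv.Perm (Fin N))
    (φ : (Fin n → Fin N) → Fin n → Fin N) {j k : ℕ}
    (proper : ∀ c, IsProperColoring lt c → IsProperColoring lt (φ c))
    (involutive : ∀ c, IsProperColoring lt c → φ (φ c) = c)
    (asc : ∀ c, IsProperColoring lt c → (ascC lt (φ c) = k ↔ ascC lt c = j))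
    (content : ∀ c, IsProperColoring lt c →
      ∏ i, (X (φ c i) : MvPolynomial (Fin N) ℤ) = ∏ i, X (σ (c i))) :
    rename σ (ascCoeff N n lt j) = ascCoeff N n lt k := by
  simp only [ascCoeff, map_sum, map_prod, rename_X]
  refine sum_nbij' φ φ ?_ ?_ ?_ ?_ ?_ <;> simp only [mem_filter, mem_univ, true_and]
  · exact fun c hc => ⟨proper c hc.1, (asc c hc.1).2 hc.2⟩
  · intro c hc
    refine ⟨proper c hc.1, (asc _ (proper c hc.1)).1 ?_⟩
    rw [involutive c hc.1]; exact hc.2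
  · exact fun c hc => involutive c hc.1
  · exact fun c hc => involutive c hc.1
  · exact fun c hc => (content c hc.1).symm

theorem ascC_le_numIncEdges (lt : Fin n → Fin n → Prop) (c : Fin n → Fin N) :
    ascC lt c ≤ numIncEdges lt :=
  card_le_card fun p hp => by
    simp only [mem_filter, mem_univ, true_and] at hp ⊢
    exact ⟨hp.1, hp.2.1⟩

theorem ascC_rev {lt : Fin n → Fin n → Prop} {c : Fin n → Fin N}
    (hc : IsProperColoring lt c) :
    ascC lt (Fin.rev ∘ c) = numIncEdges lt - ascC lt c := by
  have hsplit := card_filter_add_card_filter_not (s := univ.filter fun p : Fin n × Fin n =>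
    p.1 < p.2 ∧ Incomp lt p.1 p.2) (fun p => (c p.1 : ℕ) < (c p.2 : ℕ))
  simp only [filter_filter, and_assoc] at hsplit
  rw [numIncEdges, ← hsplit, ascC, ascC, Nat.add_sub_cancel_left]
  refine congrArg card <| filter_congr fun p _ =>
    and_congr_right fun _ => and_congr_right fun h => ?_
  have := Fin.val_injective.ne (hc _ _ h)
  simp only [Function.comp_apply, Fin.val_rev]
  omega

theorem rename_revPerm_ascCoeff (lt : Fin n → Fin n → Prop) {j : ℕ}
    (hj : j ≤ numIncEdges lt) :
    rename Fin.revPerm (ascCoeff N n lt j) = ascCoeff N n lt (numIncEdges lt - j) := by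
  refine rename_ascCoeff_of_involutive _ (Fin.rev ∘ ·) (fun c hc u v h => ?_)
    (fun c _ => by ext; simp) (fun c hc => ?_) (fun c _ => by simp)
  · exact Fin.rev_injective.ne (hc u v h)
  · have := ascC_le_numIncEdges lt c
    rw [ascC_rev hc]
    omega

theorem MvPolynomial.IsSymmetric.of_rename_swap_adjacent {R : Type*} [CommSemiring R]
    {φ : MvPolynomial (Fin N) R}
    (h : ∀ a b : Fin N, (b : ℕ) = a + 1 → rename (Equiv.swap a b) φ = φ) :
    φ.IsSymmetric := by
  cases N with
  | zero => intro e; rw [Subsingleton.elim e 1, Equiv.Perm.coe_one, rename_id, AlgHom.id_apply]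
  | succ M =>
    let S : Submonoid (Equiv.Perm (Fin (M + 1))) :=
      { carrier := {e | rename e φ = φ}
        one_mem' := by simp [rename_id]
        mul_mem' := fun {e f} he hf => by
          simp only [Set.mem_ofPred_eq, Equiv.Perm.coe_mul, ← rename_rename] at he hf ⊢
          rw [hf, he] }
    have hS : Submonoid.closure (Set.range fun i : Fin M => Equiv.swap i.castSucc i.succ) ≤ S :=
      Submonoid.closure_le.2 (Set.range_subset_iff.2 fun i => h _ _ (by simp))
    rw [Equiv.Perm.mclosure_swap_castSucc_succ] at hS
    exact fun e => hS (Submonoid.mem_top e)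

theorem Equiv.swap_apply_of_not_or {α : Type*} [DecidableEq α] {a b x : α}
    (hx : ¬(x = a ∨ x = b)) : Equiv.swap a b x = x :=
  Equiv.swap_apply_of_ne_of_ne (fun h => hx (.inl h)) fun h => hx (.inr h)

theorem Equiv.swap_apply_eq_or_iff {α : Type*} [DecidableEq α] {a b x : α} :
    (Equiv.swap a b x = a ∨ Equiv.swap a b x = b) ↔ (x = a ∨ x = b) := by
  rw [Equiv.swap_apply_eq_iff, Equiv.swap_apply_eq_iff, Equiv.swap_apply_left,
    Equiv.swap_apply_right, or_comm]

theorem Fin.val_swap_lt_iff {a b x d : Fin N} (hab : (b : ℕ) = a + 1) (hd : ¬(d = a ∨ d = b)) :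
    ((Equiv.swap a b x : Fin N) : ℕ) < d ↔ (x : ℕ) < d := by
  have ha : (d : ℕ) ≠ a := fun h => hd (.inl (Fin.ext h))
  have hb : (d : ℕ) ≠ b := fun h => hd (.inr (Fin.ext h))
  rcases eq_or_ne x a with rfl | hxa
  · rw [Equiv.swap_apply_left]; omega
  rcases eq_or_ne x b with rfl | hxb
  · rw [Equiv.swap_apply_right]; omega
  rw [Equiv.swap_apply_of_ne_of_ne hxa hxb]

theorem Fin.lt_val_swap_iff {a b x d : Fin N} (hab : (b : ℕ) = a + 1) (hd : ¬(d = a ∨ d = b)) :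
    (d : ℕ) < (Equiv.swap a b x : Fin N) ↔ (d : ℕ) < x := by
  have ha : (d : ℕ) ≠ a := fun h => hd (.inl (Fin.ext h))
  have hb : (d : ℕ) ≠ b := fun h => hd (.inr (Fin.ext h))
  rcases eq_or_ne x a with rfl | hxa
  · rw [Equiv.swap_apply_left]; omega
  rcases eq_or_ne x b with rfl | hxb
  · rw [Equiv.swap_apply_right]; omega
  rw [Equiv.swap_apply_of_ne_of_ne hxa hxb]

section SortedEnumeration

variable {α : Type*} [LinearOrder α] {s : Finset α} {i : ℕ}

/-- The `i`-th smallest element of `s`; the default `d` is returned when `i ≥ s.card`. -/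
def sortedGet (s : Finset α) (d : α) (i : ℕ) : α := (s.sort (· ≤ ·)).getD i d

def sortedIdx (s : Finset α) (x : α) : ℕ := (s.sort (· ≤ ·)).idxOf x

theorem sortedGet_eq_getElem (h : i < s.card) (d : α) :
    sortedGet s d i = (s.sort (· ≤ ·))[i]'(by rwa [length_sort]) := by
  simp [sortedGet, List.getD_eq_getElem?_getD, h]

theorem sortedGet_congr_default (h : i < s.card) (d d' : α) :
    sortedGet s d i = sortedGet s d' i := by
  rw [sortedGet_eq_getElem h, sortedGet_eq_getElem h]

theorem sortedGet_mem (h : i < s.card) (d : α) : sortedGet s d i ∈ s := by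
  rw [sortedGet_eq_getElem h, ← mem_sort (· ≤ ·)]
  exact List.getElem_mem _

theorem sortedGet_lt_sortedGet {j : ℕ} (hij : i < j) (hj : j < s.card) (d : α) :
    sortedGet s d i < sortedGet s d j := by
  rw [sortedGet_eq_getElem (hij.trans hj), sortedGet_eq_getElem hj]
  exact (sortedLT_sort s).getElem_lt_getElem_of_lt hij

theorem sortedIdx_lt_card {x : α} (hx : x ∈ s) : sortedIdx s x < s.card := by
  rw [← length_sort (· ≤ ·)]
  exact List.idxOf_lt_length_of_mem ((mem_sort _).2 hx)

theorem sortedGet_sortedIdx {x : α} (hx : x ∈ s) (d : α) :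
    sortedGet s d (sortedIdx s x) = x := by
  rw [sortedGet_eq_getElem (sortedIdx_lt_card hx)]
  exact List.getElem_idxOf _

theorem sortedIdx_sortedGet (h : i < s.card) (d : α) : sortedIdx s (sortedGet s d i) = i := by
  rw [sortedGet_eq_getElem h]
  exact (sortedLT_sort s).nodup.idxOf_getElem _ _

theorem sortedGet_le_sortedGet {j : ℕ} (hij : i ≤ j) (hj : j < s.card) (d : α) :
    sortedGet s d i ≤ sortedGet s d j := by
  rcases hij.eq_or_lt with rfl | hij
  · exact le_rfl
  · exact (sortedGet_lt_sortedGet hij hj d).le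

theorem not_mem_of_sortedGet_lt_of_lt_sortedGet {z d : α} (hi : i + 1 < s.card)
    (h₁ : sortedGet s d i < z) (h₂ : z < sortedGet s d (i + 1)) : z ∉ s := by
  intro hz
  have hk := sortedIdx_lt_card hz
  rw [← sortedGet_sortedIdx hz d] at h₁ h₂
  have hik : i < sortedIdx s z := by
    by_contra! hki
    exact (sortedGet_le_sortedGet hki (by omega) d).not_gt h₁
  exact (sortedGet_le_sortedGet hik hk d).not_gt h₂

end SortedEnumeration

def partnerIdx (i : ℕ) : ℕ := if i % 2 = 0 then i + 1 else i - 1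

theorem partnerIdx_partnerIdx (i : ℕ) : partnerIdx (partnerIdx i) = i := by
  unfold partnerIdx; split_ifs <;> omega

theorem partnerIdx_eq_or (i : ℕ) : partnerIdx i = i + 1 ∨ i = partnerIdx i + 1 := by
  unfold partnerIdx; split_ifs <;> omega

theorem partnerIdx_lt_of_even {i m : ℕ} (hi : i < m) (hm : Even m) : partnerIdx i < m := by
  rw [Nat.even_iff] at hm; unfold partnerIdx; split_ifs <;> omega

theorem partnerIdx_lt_iff_of_odd {i m : ℕ} (hi : i < m) (hm : Odd m) :
    partnerIdx i < m ↔ i + 1 < m := by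
  rw [Nat.odd_iff] at hm; unfold partnerIdx; split_ifs <;> omega

section TwoColoredComponents

variable (lt : Fin n → Fin n → Prop) (c : Fin n → Fin N) (a b : Fin N)

def twoColorGraph : SimpleGraph (Fin n) where
  Adj u v := Incomp lt u v ∧ (c u = a ∨ c u = b) ∧ (c v = a ∨ c v = b)
  symm := ⟨fun _ _ h => ⟨h.1.symm, h.2.2, h.2.1⟩⟩
  loopless := ⟨fun _ h => h.1.1 rfl⟩

noncomputable def twoColorComp (u : Fin n) : Finset (Fin n) :=
  univ.filter ((twoColorGraph lt c a b).Reachable u)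

variable {lt c a b} {u v x y : Fin n}

theorem mem_twoColorComp :
    v ∈ twoColorComp lt c a b u ↔ (twoColorGraph lt c a b).Reachable u v := by
  simp [twoColorComp]

theorem self_mem_twoColorComp (u : Fin n) : u ∈ twoColorComp lt c a b u :=
  mem_twoColorComp.2 .rfl

theorem twoColorComp_eq_of_reachable (h : (twoColorGraph lt c a b).Reachable u v) :
    twoColorComp lt c a b u = twoColorComp lt c a b v := by
  ext w
  simp only [mem_twoColorComp]
  exact ⟨h.symm.trans, h.trans⟩

theorem colors_of_reachable (hu : c u = a ∨ c u = b)
    (h : (twoColorGraph lt c a b).Reachable u v) : c v = a ∨ c v = b := by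
  rw [SimpleGraph.reachable_iff_reflTransGen] at h
  induction h with
  | refl => exact hu
  | tail _ hadj _ => exact hadj.2.2

theorem twoColorComp_eq_singleton (hu : ¬ (c u = a ∨ c u = b)) :
    twoColorComp lt c a b u = {u} := by
  ext v
  rw [mem_twoColorComp, mem_singleton, SimpleGraph.reachable_iff_reflTransGen]
  refine ⟨fun h => ?_, fun h => h ▸ .refl⟩
  rcases h.cases_head with rfl | ⟨w, hadj, -⟩
  · rfl
  · exact absurd hadj.2.1 hu

variable (hc : IsProperColoring lt c)
include hc

theorem color_eq_swap_of_adj (h : (twoColorGraph lt c a b).Adj u v) :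
    c v = Equiv.swap a b (c u) := by
  obtain ⟨hin, hu | hu, hv | hv⟩ := h <;> have := hc _ _ hin <;> simp_all

variable (hconv : IncConvex lt)
include hconv

theorem twoColorGraph.not_between {z : Fin n} (h : (twoColorGraph lt c a b).Adj u v)
    (huz : u < z) (hzv : z < v) (hz : c z = a ∨ c z = b) : False := by
  obtain ⟨huz', hzv'⟩ := hconv huz hzv h.1
  have h₁ := color_eq_swap_of_adj hc (b := b) ⟨huz', h.2.1, hz⟩
  have h₂ := color_eq_swap_of_adj hc (b := b) ⟨hzv', hz, h.2.2⟩
  rw [h₁, Equiv.swap_apply_self] at h₂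
  exact hc _ _ h.1 h₂.symm

theorem twoColorGraph.adj_of_reachable {w : Fin n} (hx : c x = a ∨ c x = b)
    (hy : c y = a ∨ c y = b) (hxy : x < y)
    (hgap : ∀ z, (twoColorGraph lt c a b).Reachable x z → ¬ (x < z ∧ z < y))
    (hw : (twoColorGraph lt c a b).Reachable x w) (hyw : y ≤ w) :
    (twoColorGraph lt c a b).Adj x y := by
  rw [SimpleGraph.reachable_iff_reflTransGen] at hw
  induction hw with
  | refl => exact absurd (hxy.trans_le hyw) (lt_irrefl x)
  | @tail p q hxp hpq ih =>
    rcases le_or_gt y p with hyp | hpy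
    · exact ih hyp
    have hpx : p ≤ x := not_lt.1 fun hxp' =>
      hgap p ((SimpleGraph.reachable_iff_reflTransGen _ _).2 hxp) ⟨hxp', hpy⟩
    obtain rfl : p = x := hpx.eq_or_lt.resolve_right fun h =>
      not_between hc hconv hpq h (hxy.trans_le hyw) hx
    obtain rfl : q = y := (hyw.eq_or_lt.resolve_right fun h =>
      not_between hc hconv hpq hxy h hy).symm
    exact hpq

theorem adj_sortedGet_succ (hu : c u = a ∨ c u = b) {i : ℕ}
    (hi : i + 1 < (twoColorComp lt c a b u).card) (d : Fin n) :
    (twoColorGraph lt c a b).Adj (sortedGet (twoColorComp lt c a b u) d i)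
      (sortedGet (twoColorComp lt c a b u) d (i + 1)) := by
  have hux := mem_twoColorComp.1
    (sortedGet_mem (s := twoColorComp lt c a b u) (i := i) (by omega) d)
  have huy := mem_twoColorComp.1 (sortedGet_mem hi d)
  refine twoColorGraph.adj_of_reachable hc hconv (colors_of_reachable hu hux)
    (colors_of_reachable hu huy) (sortedGet_lt_sortedGet (lt_add_one i) hi d)
    (fun z hz hbetween => ?_) (hux.symm.trans huy) le_rfl
  exact not_mem_of_sortedGet_lt_of_lt_sortedGet hi hbetween.1 hbetween.2
    (mem_twoColorComp.2 (hux.trans hz))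

theorem sortedIdx_eq_succ_of_adj (h : (twoColorGraph lt c a b).Adj x y) (hxy : x < y) :
    sortedIdx (twoColorComp lt c a b x) y = sortedIdx (twoColorComp lt c a b x) x + 1 := by
  set C := twoColorComp lt c a b x
  have hxC : x ∈ C := self_mem_twoColorComp x
  have hyC : y ∈ C := mem_twoColorComp.2 h.reachable
  have hk := sortedIdx_lt_card hxC
  have hm := sortedIdx_lt_card hyC
  have hkm : sortedIdx C x < sortedIdx C y := by
    by_contra! hmk
    have := sortedGet_le_sortedGet hmk hk x
    rw [sortedGet_sortedIdx hxC, sortedGet_sortedIdx hyC] at this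
    exact this.not_gt hxy
  by_contra hne
  have hz := sortedGet_mem (s := C) (i := sortedIdx C x + 1) (by omega) x
  refine twoColorGraph.not_between hc hconv h ?_ ?_
    (colors_of_reachable h.2.1 (mem_twoColorComp.1 hz))
  · conv_lhs => rw [← sortedGet_sortedIdx hxC x]
    exact sortedGet_lt_sortedGet (lt_add_one _) (by omega) x
  · conv_rhs => rw [← sortedGet_sortedIdx hyC x]
    exact sortedGet_lt_sortedGet (by omega) hm x

end TwoColoredComponents

section BenderKnuth

variable (lt : Fin n → Fin n → Prop) (c : Fin n → Fin N) (a b : Fin N)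

/-- Pairs off the elements of a component two by two in increasing order; the last element of
an odd component is left without partner (see `HasTwoColorPartner`). -/
noncomputable def twoColorPartner (u : Fin n) : Fin n :=
  sortedGet (twoColorComp lt c a b u) u (partnerIdx (sortedIdx (twoColorComp lt c a b u) u))

def HasTwoColorPartner (u : Fin n) : Prop :=
  (c u = a ∨ c u = b) ∧
    partnerIdx (sortedIdx (twoColorComp lt c a b u) u) < (twoColorComp lt c a b u).card

noncomputable def bkRecolor (u : Fin n) : Fin N :=
  if Odd (twoColorComp lt c a b u).card then Equiv.swap a b (c u) else c u

variable {lt c a b} {u v : Fin n}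

theorem sortedIdx_twoColorPartner (hp : HasTwoColorPartner lt c a b u) :
    sortedIdx (twoColorComp lt c a b u) (twoColorPartner lt c a b u) =
      partnerIdx (sortedIdx (twoColorComp lt c a b u) u) :=
  sortedIdx_sortedGet hp.2 u

theorem twoColorComp_twoColorPartner (hp : HasTwoColorPartner lt c a b u) :
    twoColorComp lt c a b (twoColorPartner lt c a b u) = twoColorComp lt c a b u :=
  (twoColorComp_eq_of_reachable (mem_twoColorComp.1 (sortedGet_mem hp.2 u))).symm

theorem twoColorPartner_twoColorPartner (hp : HasTwoColorPartner lt c a b u) :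
    twoColorPartner lt c a b (twoColorPartner lt c a b u) = u := by
  have hu : u ∈ twoColorComp lt c a b u := self_mem_twoColorComp u
  rw [twoColorPartner, twoColorComp_twoColorPartner hp, sortedIdx_twoColorPartner hp,
    partnerIdx_partnerIdx, sortedGet_congr_default (sortedIdx_lt_card hu) _ u,
    sortedGet_sortedIdx hu]

theorem adj_twoColorPartner (hc : IsProperColoring lt c) (hconv : IncConvex lt)
    (hp : HasTwoColorPartner lt c a b u) :
    (twoColorGraph lt c a b).Adj u (twoColorPartner lt c a b u) := by
  set C := twoColorComp lt c a b u
  have hu : sortedGet C u (sortedIdx C u) = u := sortedGet_sortedIdx (self_mem_twoColorComp u) u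
  rcases partnerIdx_eq_or (sortedIdx C u) with h | h
  · have := adj_sortedGet_succ hc hconv hp.1 (h ▸ hp.2) u
    rwa [hu, ← h] at this
  · have := adj_sortedGet_succ hc hconv hp.1 (i := partnerIdx (sortedIdx C u))
      (h ▸ sortedIdx_lt_card (self_mem_twoColorComp u)) u
    rw [← h, hu] at this
    exact this.symm

theorem color_twoColorPartner (hc : IsProperColoring lt c) (hconv : IncConvex lt)
    (hp : HasTwoColorPartner lt c a b u) :
    c (twoColorPartner lt c a b u) = Equiv.swap a b (c u) :=
  color_eq_swap_of_adj hc (adj_twoColorPartner hc hconv hp)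

theorem HasTwoColorPartner.twoColorPartner (hc : IsProperColoring lt c) (hconv : IncConvex lt)
    (hp : HasTwoColorPartner lt c a b u) :
    HasTwoColorPartner lt c a b (twoColorPartner lt c a b u) := by
  refine ⟨(adj_twoColorPartner hc hconv hp).2.2, ?_⟩
  rw [twoColorComp_twoColorPartner hp, sortedIdx_twoColorPartner hp, partnerIdx_partnerIdx]
  exact sortedIdx_lt_card (self_mem_twoColorComp u)

theorem hasTwoColorPartner_of_even (h : Even (twoColorComp lt c a b u).card) :
    HasTwoColorPartner lt c a b u := by
  by_cases hu : c u = a ∨ c u = b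
  · exact ⟨hu, partnerIdx_lt_of_even (sortedIdx_lt_card (self_mem_twoColorComp u)) h⟩
  · rw [twoColorComp_eq_singleton hu, card_singleton] at h
    exact absurd h Nat.not_even_one

end BenderKnuth

section BenderKnuthRecolor

variable {lt : Fin n → Fin n → Prop} {c : Fin n → Fin N} {a b : Fin N} {u v : Fin n}

theorem bkRecolor_of_odd (h : Odd (twoColorComp lt c a b u).card) :
    bkRecolor lt c a b u = Equiv.swap a b (c u) :=
  if_pos h

theorem bkRecolor_of_not_odd (h : ¬Odd (twoColorComp lt c a b u).card) :
    bkRecolor lt c a b u = c u :=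
  if_neg h

theorem bkRecolor_eq_or :
    bkRecolor lt c a b u = c u ∨ bkRecolor lt c a b u = Equiv.swap a b (c u) := by
  unfold bkRecolor; split_ifs <;> simp

theorem bkRecolor_of_not_or (hu : ¬(c u = a ∨ c u = b)) : bkRecolor lt c a b u = c u := by
  rcases bkRecolor_eq_or (lt := lt) (u := u) with h | h
  · exact h
  · rw [h, Equiv.swap_apply_of_not_or hu]

theorem bkRecolor_eq_or_iff :
    (bkRecolor lt c a b u = a ∨ bkRecolor lt c a b u = b) ↔ (c u = a ∨ c u = b) := by
  rcases bkRecolor_eq_or (lt := lt) (c := c) (a := a) (b := b) (u := u) with h | h <;> rw [h]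
  exact Equiv.swap_apply_eq_or_iff

theorem twoColorGraph_bkRecolor :
    twoColorGraph lt (bkRecolor lt c a b) a b = twoColorGraph lt c a b := by
  ext u v
  simp only [twoColorGraph, bkRecolor_eq_or_iff]

theorem bkRecolor_bkRecolor : bkRecolor lt (bkRecolor lt c a b) a b = c := by
  funext u
  have hC : twoColorComp lt (bkRecolor lt c a b) a b u = twoColorComp lt c a b u := by
    rw [twoColorComp, twoColorComp, twoColorGraph_bkRecolor]
  by_cases h : Odd (twoColorComp lt c a b u).card
  · rw [bkRecolor_of_odd (hC ▸ h), bkRecolor_of_odd h, Equiv.swap_apply_self]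
  · rw [bkRecolor_of_not_odd (hC ▸ h), bkRecolor_of_not_odd h]

theorem bkRecolor_ne_of_not_or (hv : ¬(c v = a ∨ c v = b)) (h : c u ≠ c v) :
    bkRecolor lt c a b u ≠ c v := by
  rcases bkRecolor_eq_or (lt := lt) (c := c) (a := a) (b := b) (u := u) with hu | hu <;> rw [hu]
  · exact h
  · rw [← Equiv.swap_apply_of_not_or hv]
    exact (Equiv.injective _).ne h

theorem isProperColoring_bkRecolor (hc : IsProperColoring lt c) :
    IsProperColoring lt (bkRecolor lt c a b) := by
  intro u v huv
  by_cases hadj : (twoColorGraph lt c a b).Adj u v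
  · have hC := twoColorComp_eq_of_reachable hadj.reachable
    by_cases h : Odd (twoColorComp lt c a b u).card
    · rw [bkRecolor_of_odd h, bkRecolor_of_odd (hC ▸ h)]
      exact (Equiv.injective _).ne (hc u v huv)
    · rw [bkRecolor_of_not_odd h, bkRecolor_of_not_odd (hC ▸ h)]
      exact hc u v huv
  · have : ¬(c u = a ∨ c u = b) ∨ ¬(c v = a ∨ c v = b) := by
      by_contra! h
      exact hadj ⟨huv, h.1, h.2⟩
    rcases this with hu | hv
    · rw [bkRecolor_of_not_or hu]
      exact (bkRecolor_ne_of_not_or hu (hc v u huv.symm)).symm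
    · rw [bkRecolor_of_not_or hv]
      exact bkRecolor_ne_of_not_or hv (hc u v huv)

theorem bkRecolor_lt_iff (hab : (b : ℕ) = a + 1) (huv : Incomp lt u v)
    (hD : ¬((twoColorGraph lt c a b).Adj u v ∧ Odd (twoColorComp lt c a b u).card)) :
    (bkRecolor lt c a b u : ℕ) < bkRecolor lt c a b v ↔ (c u : ℕ) < c v := by
  by_cases hadj : (twoColorGraph lt c a b).Adj u v
  · have hodd : ¬Odd (twoColorComp lt c a b u).card := fun h => hD ⟨hadj, h⟩
    rw [bkRecolor_of_not_odd hodd,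
      bkRecolor_of_not_odd (twoColorComp_eq_of_reachable hadj.reachable ▸ hodd)]
  have : ¬(c u = a ∨ c u = b) ∨ ¬(c v = a ∨ c v = b) := by
    by_contra! h
    exact hadj ⟨huv, h.1, h.2⟩
  rcases this with hu | hv
  · rw [bkRecolor_of_not_or hu]
    rcases bkRecolor_eq_or (lt := lt) (c := c) (a := a) (b := b) (u := v) with h | h <;> rw [h]
    exact Fin.lt_val_swap_iff hab hu
  · rw [bkRecolor_of_not_or hv]
    rcases bkRecolor_eq_or (lt := lt) (c := c) (a := a) (b := b) (u := u) with h | h <;> rw [h]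
    exact Fin.val_swap_lt_iff hab hv

variable (hc : IsProperColoring lt c) (hconv : IncConvex lt)
include hc hconv

theorem prod_bkRecolor {M : Type*} [CommMonoid M] (f : Fin N → M) :
    ∏ u, f (bkRecolor lt c a b u) = ∏ u, f (Equiv.swap a b (c u)) := by
  rw [← prod_filter_mul_prod_filter_not univ fun u => Odd (twoColorComp lt c a b u).card,
    ← prod_filter_mul_prod_filter_not univ fun u => Odd (twoColorComp lt c a b u).card]
  congr 1
  · exact prod_congr rfl fun u hu => by rw [bkRecolor_of_odd (mem_filter.1 hu).2]
  rw [prod_congr rfl fun u hu => congrArg f (bkRecolor_of_not_odd (mem_filter.1 hu).2)]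
  -- on the even components, the partner map exchanges the colours `a` and `b`
  have hp : ∀ u, ¬Odd (twoColorComp lt c a b u).card → HasTwoColorPartner lt c a b u :=
    fun u h => hasTwoColorPartner_of_even (Nat.not_odd_iff_even.1 h)
  refine prod_nbij' (twoColorPartner lt c a b) (twoColorPartner lt c a b) ?_ ?_ ?_ ?_ ?_ <;>
    simp only [mem_filter, mem_univ, true_and]
  · exact fun u h => by rwa [twoColorComp_twoColorPartner (hp u h)]
  · exact fun u h => by rwa [twoColorComp_twoColorPartner (hp u h)]
  · exact fun u h => twoColorPartner_twoColorPartner (hp u h)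
  · exact fun u h => twoColorPartner_twoColorPartner (hp u h)
  · exact fun u h => by rw [color_twoColorPartner hc hconv (hp u h), Equiv.swap_apply_self]

end BenderKnuthRecolor

section Ascents

variable {lt : Fin n → Fin n → Prop} {c : Fin n → Fin N} {a b : Fin N} {u v : Fin n}
  (hc : IsProperColoring lt c)
include hc

theorem val_lt_val_iff_of_adj (hab : (b : ℕ) = a + 1) (h : (twoColorGraph lt c a b).Adj u v) :
    (c u : ℕ) < c v ↔ c u = a := by
  rw [color_eq_swap_of_adj hc h]
  rcases h.2.1 with hu | hu <;> rw [hu]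
  · simp [hab]
  · have : b ≠ a := fun h => by rw [h] at hab; omega
    simp [hab, this]

theorem bkRecolor_lt_iff_of_adj_of_odd (hab : (b : ℕ) = a + 1)
    (h : (twoColorGraph lt c a b).Adj u v) (hodd : Odd (twoColorComp lt c a b u).card) :
    (bkRecolor lt c a b u : ℕ) < bkRecolor lt c a b v ↔ c u = b := by
  have hodd' := twoColorComp_eq_of_reachable h.reachable ▸ hodd
  rw [bkRecolor_of_odd hodd, bkRecolor_of_odd hodd', ← color_eq_swap_of_adj hc h,
    ← color_eq_swap_of_adj hc h.symm, val_lt_val_iff_of_adj hc hab h.symm,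
    color_eq_swap_of_adj hc h, Equiv.swap_apply_eq_iff, Equiv.swap_apply_left]

variable (hconv : IncConvex lt)
include hconv

theorem card_adj_eq_card_lower (R : Fin n → Prop) [DecidablePred R] :
    (univ.filter fun p : Fin n × Fin n =>
        p.1 < p.2 ∧ (twoColorGraph lt c a b).Adj p.1 p.2 ∧ R p.1).card =
      (univ.filter fun u => (c u = a ∨ c u = b) ∧
        sortedIdx (twoColorComp lt c a b u) u + 1 < (twoColorComp lt c a b u).card ∧
        R u).card := by
  refine card_nbij' Prod.fst (fun u => (u, sortedGet (twoColorComp lt c a b u) u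
    (sortedIdx (twoColorComp lt c a b u) u + 1))) ?_ ?_ ?_ fun _ _ => rfl
  · rintro ⟨x, y⟩ h
    simp only [coe_filter, mem_univ, true_and, Set.mem_ofPred_eq] at h ⊢
    obtain ⟨hxy, hadj, hR⟩ := h
    rw [← sortedIdx_eq_succ_of_adj hc hconv hadj hxy]
    exact ⟨hadj.2.1, sortedIdx_lt_card (mem_twoColorComp.2 hadj.reachable), hR⟩
  · intro u h
    simp only [coe_filter, mem_univ, true_and, Set.mem_ofPred_eq] at h ⊢
    obtain ⟨hu, hi, hR⟩ := h
    have hget : sortedGet (twoColorComp lt c a b u) u (sortedIdx (twoColorComp lt c a b u) u) = u :=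
      sortedGet_sortedIdx (self_mem_twoColorComp u) u
    have hadj := adj_sortedGet_succ hc hconv hu hi u
    have hlt := sortedGet_lt_sortedGet (lt_add_one _) hi u
    rw [hget] at hadj hlt
    exact ⟨hlt, hadj, hR⟩
  · rintro ⟨x, y⟩ h
    simp only [coe_filter, mem_univ, true_and, Set.mem_ofPred_eq] at h
    obtain ⟨hxy, hadj, -⟩ := h
    simp only [Prod.mk.injEq, true_and]
    rw [← sortedIdx_eq_succ_of_adj hc hconv hadj hxy,
      sortedGet_sortedIdx (mem_twoColorComp.2 hadj.reachable)]

theorem card_adj_odd_eq_card_hasTwoColorPartner (x : Fin N) :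
    (univ.filter fun p : Fin n × Fin n => p.1 < p.2 ∧ (twoColorGraph lt c a b).Adj p.1 p.2 ∧
        Odd (twoColorComp lt c a b p.1).card ∧ c p.1 = x).card =
      (univ.filter fun u => HasTwoColorPartner lt c a b u ∧
        Odd (twoColorComp lt c a b u).card ∧ c u = x).card := by
  refine (card_adj_eq_card_lower hc hconv
    (fun u => Odd (twoColorComp lt c a b u).card ∧ c u = x)).trans ?_
  refine congrArg card (filter_congr fun u _ => ?_)
  have hk : sortedIdx (twoColorComp lt c a b u) u < (twoColorComp lt c a b u).card :=
    sortedIdx_lt_card (self_mem_twoColorComp u)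
  rw [HasTwoColorPartner, and_assoc]
  exact and_congr_right fun _ =>
    ⟨fun ⟨hi, hodd, hx⟩ => ⟨(partnerIdx_lt_iff_of_odd hk hodd).2 hi, hodd, hx⟩,
      fun ⟨hi, hodd, hx⟩ => ⟨(partnerIdx_lt_iff_of_odd hk hodd).1 hi, hodd, hx⟩⟩

theorem card_hasTwoColorPartner_odd_color :
    (univ.filter fun u => HasTwoColorPartner lt c a b u ∧
        Odd (twoColorComp lt c a b u).card ∧ c u = a).card =
      (univ.filter fun u => HasTwoColorPartner lt c a b u ∧
        Odd (twoColorComp lt c a b u).card ∧ c u = b).card := by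
  refine card_nbij' (twoColorPartner lt c a b) (twoColorPartner lt c a b) ?_ ?_ ?_ ?_ <;>
    simp only [Set.MapsTo, Set.LeftInvOn, coe_filter, mem_univ, true_and, Set.mem_ofPred_eq]
  · rintro u ⟨hp, hodd, hu⟩
    refine ⟨hp.twoColorPartner hc hconv, (twoColorComp_twoColorPartner hp).symm ▸ hodd, ?_⟩
    rw [color_twoColorPartner hc hconv hp, hu, Equiv.swap_apply_left]
  · rintro u ⟨hp, hodd, hu⟩
    refine ⟨hp.twoColorPartner hc hconv, (twoColorComp_twoColorPartner hp).symm ▸ hodd, ?_⟩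
    rw [color_twoColorPartner hc hconv hp, hu, Equiv.swap_apply_right]
  · exact fun u h => twoColorPartner_twoColorPartner h.1
  · exact fun u h => twoColorPartner_twoColorPartner h.1

end Ascents

theorem ascC_bkRecolor {lt : Fin n → Fin n → Prop} {c : Fin n → Fin N} {a b : Fin N}
    (hc : IsProperColoring lt c) (hconv : IncConvex lt) (hab : (b : ℕ) = a + 1) :
    ascC lt (bkRecolor lt c a b) = ascC lt c := by
  let D : Fin n × Fin n → Prop := fun p =>
    (twoColorGraph lt c a b).Adj p.1 p.2 ∧ Odd (twoColorComp lt c a b p.1).card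
  have split : ∀ c' : Fin n → Fin N, ascC lt c' =
      (univ.filter fun p : Fin n × Fin n =>
        (p.1 < p.2 ∧ Incomp lt p.1 p.2 ∧ (c' p.1 : ℕ) < c' p.2) ∧ D p).card +
      (univ.filter fun p : Fin n × Fin n =>
        (p.1 < p.2 ∧ Incomp lt p.1 p.2 ∧ (c' p.1 : ℕ) < c' p.2) ∧ ¬D p).card := by
    intro c'
    rw [ascC, ← card_filter_add_card_filter_not D, filter_filter, filter_filter]
  rw [split, split]
  congr 1
  · calc _ = (univ.filter fun p : Fin n × Fin n => p.1 < p.2 ∧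
            (twoColorGraph lt c a b).Adj p.1 p.2 ∧
            Odd (twoColorComp lt c a b p.1).card ∧ c p.1 = b).card :=
          congrArg card <| filter_congr fun p _ =>
            ⟨fun ⟨⟨hlt, _, hasc⟩, hadj, hodd⟩ =>
              ⟨hlt, hadj, hodd, (bkRecolor_lt_iff_of_adj_of_odd hc hab hadj hodd).1 hasc⟩,
            fun ⟨hlt, hadj, hodd, hb⟩ =>
              ⟨⟨hlt, hadj.1, (bkRecolor_lt_iff_of_adj_of_odd hc hab hadj hodd).2 hb⟩,
                hadj, hodd⟩⟩
      _ = _ := card_adj_odd_eq_card_hasTwoColorPartner hc hconv b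
      _ = _ := (card_hasTwoColorPartner_odd_color hc hconv).symm
      _ = _ := (card_adj_odd_eq_card_hasTwoColorPartner hc hconv a).symm
      _ = _ := congrArg card <| filter_congr fun p _ =>
            ⟨fun ⟨hlt, hadj, hodd, ha⟩ =>
              ⟨⟨hlt, hadj.1, (val_lt_val_iff_of_adj hc hab hadj).2 ha⟩, hadj, hodd⟩,
            fun ⟨⟨hlt, _, hasc⟩, hadj, hodd⟩ =>
              ⟨hlt, hadj, hodd, (val_lt_val_iff_of_adj hc hab hadj).1 hasc⟩⟩
  · exact congrArg card <| filter_congr fun p _ => and_congr_left fun hD =>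
      and_congr_right fun _ => and_congr_right fun huv => bkRecolor_lt_iff hab huv hD

theorem rename_swap_ascCoeff {lt : Fin n → Fin n → Prop} (hconv : IncConvex lt) {a b : Fin N}
    (hab : (b : ℕ) = a + 1) (j : ℕ) :
    rename (Equiv.swap a b) (ascCoeff N n lt j) = ascCoeff N n lt j :=
  rename_ascCoeff_of_involutive _ (fun c => bkRecolor lt c a b)
    (fun _ hc => isProperColoring_bkRecolor hc) (fun _ _ => bkRecolor_bkRecolor)
    (fun _ hc => by rw [ascC_bkRecolor hc hconv hab]) (fun _ hc => prod_bkRecolor hc hconv X)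

theorem isSymmetric_ascCoeff {lt : Fin n → Fin n → Prop} (hconv : IncConvex lt) (j : ℕ) :
    (ascCoeff N n lt j).IsSymmetric :=
  .of_rename_swap_adjacent fun _ _ hab => rename_swap_ascCoeff hconv hab j

end

theorem chromatic_qsym_palindromic_general (n N : ℕ) (P : NUIO n) :
    ∀ j ≤ numIncEdges P.lt,
      (chromIncQSym N n P.lt).coeff j =
        (chromIncQSym N n P.lt).coeff (numIncEdges P.lt - j) := by
  intro j hj
  rw [coeff_chromIncQSym, coeff_chromIncQSym, ← rename_revPerm_ascCoeff P.lt hj,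
    isSymmetric_ascCoeff P.incConvex j]

/-- for a natural unit interval order `P` on `[n]` with `E` edges in its
incomparability graph, `X_{inc(P)}(x_1,…,x_N;t)` is palindromic in `t`:
the coefficients of `t^j` and `t^{E-j}` agree for all `0 ≤ j ≤ E`. -/
theorem chromatic_qsym_palindromic (n N : ℕ) (hN : 1 ≤ N) (P : NUIO n) :
    ∀ j ≤ numIncEdges P.lt,
      (chromIncQSym N n P.lt).coeff j =
        (chromIncQSym N n P.lt).coeff (numIncEdges P.lt - j) :=
  chromatic_qsym_palindromic_general n N P
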